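/- arXiv:2605.15244 — 2 statements merged into one kernel-verified Lean document; each statement's English description precedes it below -/
import Mathlib

section
/- For every n ∈ ℕ with n ≥ 1 and every complex z ≠ 0, one has the absolutely convergent expansion ((e^z - 1)/z)^n = ∑_{m=0}^{∞} ( S₂(m+n, n) / binom(m+n, n) ) · z^m/m!. Equivalently, the Bernoulli numbers of order -n, defined as the Maclaurin coefficients B_m^{(-n)} of ((e^z-1)/z)^n via ((e^z-1)/z)^n = ∑_m B_m^{(-n)} z^m/m!, satisfy B_m^{(-n)} = S₂(m+n,n)/binom(m+n,n). -/
/-! Expanding `(e^z - 1)^n = ∑ᵢ (-1)^(n-i) C(n,i) e^{iz}` with the binomial theorem and each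
`e^{iz}` by its exponential series gives `(e^z - 1)^n = ∑ₖ n! S₂(k,n) z^k/k!`. The coefficients
with `k < n` vanish, being `n`-th forward differences of `x ↦ x^k` at `0`, so the series can be
divided by `z^n`; then `n!/(m+n)! = 1/(C(m+n,n) m!)`. Uniqueness of the coefficients is the
identity theorem for power series, once continuity at `0` fills in the missing point `z = 0`. -/

/-- The Stirling numbers of the second kind,
`S₂(m,n) = (1/n!) ∑_{j=0}^{n} (-1)^j C(n,j) (n-j)^m`. -/
noncomputable def S2 (m n : ℕ) : ℝ :=
  (1 / (n.factorial : ℝ)) *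
    ∑ j ∈ Finset.range (n + 1), (-1 : ℝ) ^ j * (n.choose j : ℝ) * ((n - j : ℕ) : ℝ) ^ m

open Filter Finset Nat fwdDiff

lemma factorial_mul_S2 (m n : ℕ) :
    (n ! : ℝ) * S2 m n = ∑ i ∈ range (n + 1), (-1 : ℝ) ^ (n - i) * n.choose i * (i : ℝ) ^ m := by
  rw [S2, ← mul_assoc, mul_one_div_cancel (by positivity), one_mul, ← sum_range_reflect]
  refine sum_congr rfl fun i hi => ?_
  have hin : i ≤ n := Nat.lt_succ_iff.mp (mem_range.mp hi)
  rw [add_tsub_cancel_right, Nat.sub_sub_self hin, Nat.choose_symm hin]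

lemma S2_eq_zero_of_lt {m n : ℕ} (h : m < n) : S2 m n = 0 := by
  have hΔ := congr_fun (fwdDiff_iter_pow_eq_zero_of_lt (R := ℝ) (n := n) h) 0
  simp only [fwdDiff_iter_eq_sum_shift, zero_add, nsmul_eq_mul, mul_one, zsmul_eq_mul,
    Pi.zero_apply] at hΔ
  push_cast at hΔ
  rw [← factorial_mul_S2] at hΔ
  exact (mul_eq_zero.mp hΔ).resolve_left (by positivity)

lemma hasSum_exp_div_factorial (x : ℂ) : HasSum (fun k => x ^ k / k !) (Complex.exp x) := by
  simpa [Complex.exp_eq_exp_ℂ] using NormedSpace.expSeries_div_hasSum_exp x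

lemma factorial_mul_S2_mul_pow_div_factorial (n k : ℕ) (z : ℂ) :
    (n ! : ℂ) * S2 k n * z ^ k / k ! =
      ∑ i ∈ range (n + 1), (-1 : ℂ) ^ (n - i) * n.choose i * ((i * z) ^ k / k !) := by
  have h := congr_arg ((↑) : ℝ → ℂ) (factorial_mul_S2 k n)
  push_cast at h
  rw [h, sum_mul, sum_div]
  exact sum_congr rfl fun i _ => by ring

lemma hasSum_exp_sub_one_pow (n : ℕ) (z : ℂ) :
    HasSum (fun k => (n ! : ℂ) * S2 k n * z ^ k / k !) ((Complex.exp z - 1) ^ n) := by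
  have hbinom : (Complex.exp z - 1) ^ n =
      ∑ i ∈ range (n + 1), (-1 : ℂ) ^ (n - i) * n.choose i * Complex.exp (i * z) := by
    rw [sub_eq_add_neg, add_pow]
    exact sum_congr rfl fun i _ => by rw [Complex.exp_nat_mul]; ring
  simp_rw [factorial_mul_S2_mul_pow_div_factorial, hbinom]
  exact hasSum_sum fun i _ => (hasSum_exp_div_factorial _).mul_left _

lemma summable_norm_factorial_mul_S2_mul_pow_div_factorial (n : ℕ) (z : ℂ) :
    Summable fun k => ‖(n ! : ℂ) * S2 k n * z ^ k / (k ! : ℂ)‖ := by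
  simp_rw [factorial_mul_S2_mul_pow_div_factorial]
  refine .of_nonneg_of_le (fun _ => norm_nonneg _) (fun k => norm_sum_le _ _)
    (summable_sum fun i _ => ?_)
  simp_rw [norm_mul]
  exact (NormedSpace.norm_expSeries_div_summable _).mul_left _

lemma S2_div_choose_mul_pow_div_factorial_mul_pow (n m : ℕ) (z : ℂ) :
    ((S2 (m + n) n / (m + n).choose n : ℝ) : ℂ) * z ^ m / m ! * z ^ n =
      (n ! : ℂ) * S2 (m + n) n * z ^ (m + n) / (m + n)! := by
  have hchoose : ((m + n).choose n : ℂ) * n ! * m ! = (m + n)! := by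
    have h := Nat.choose_mul_factorial_mul_factorial (Nat.le_add_left n m)
    rw [Nat.add_sub_cancel] at h
    exact_mod_cast h
  have hn : (n ! : ℂ) ≠ 0 := mod_cast n.factorial_ne_zero
  push_cast
  rw [← hchoose, pow_add]
  field_simp

theorem hasSum_exp_sub_one_div_pow (n : ℕ) {z : ℂ} (hz : z ≠ 0) :
    HasSum (fun m => ((S2 (m + n) n / (m + n).choose n : ℝ) : ℂ) * z ^ m / m !)
      (((Complex.exp z - 1) / z) ^ n) := by
  have hz' : z ^ n ≠ 0 := pow_ne_zero n hz
  rw [← hasSum_mul_right_iff hz', div_pow, div_mul_cancel₀ _ hz']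
  simp_rw [S2_div_choose_mul_pow_div_factorial_mul_pow]
  have h := (hasSum_nat_add_iff' n).mpr (hasSum_exp_sub_one_pow n z)
  rwa [sum_eq_zero fun k hk => by rw [S2_eq_zero_of_lt (mem_range.mp hk)]; simp, sub_zero] at h

theorem summable_norm_S2_div_choose_mul_pow_div_factorial (n : ℕ) (z : ℂ) :
    Summable fun m => ‖((S2 (m + n) n / (m + n).choose n : ℝ) : ℂ) * z ^ m / (m ! : ℂ)‖ := by
  rcases eq_or_ne z 0 with rfl | hz
  · refine summable_of_ne_finset_zero (s := {0}) fun m hm => ?_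
    simp_all
  have hz' : ‖z‖ ^ n ≠ 0 := pow_ne_zero n (norm_ne_zero_iff.mpr hz)
  have h := ((summable_nat_add_iff n).mpr
    (summable_norm_factorial_mul_S2_mul_pow_div_factorial n z)).div_const (‖z‖ ^ n)
  refine h.congr fun m => ?_
  rw [← S2_div_choose_mul_pow_div_factorial_mul_pow, norm_mul, norm_pow,
    mul_div_cancel_right₀ _ hz']

theorem eq_zero_of_hasSum_mul_pow_of_ne_zero {𝕜 : Type*} [NontriviallyNormedField 𝕜]
    {c : ℕ → 𝕜} (h : ∀ z ≠ 0, HasSum (fun k => c k * z ^ k) 0) : c = 0 := by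
  set F : 𝕜 → 𝕜 := fun z => ∑' k, c k * z ^ k
  have hF : ∀ z ≠ 0, F z = 0 := fun z hz => (h z hz).tsum_eq
  have hp : HasFPowerSeriesAt F (FormalMultilinearSeries.ofScalars 𝕜 c) 0 := by
    refine hasFPowerSeriesAt_iff.mpr (Eventually.of_forall fun z => ?_)
    simp only [FormalMultilinearSeries.coeff_ofScalars, smul_eq_mul, zero_add, mul_comm (z ^ _)]
    rcases eq_or_ne z 0 with rfl | hz
    · have h0 := hasSum_single (f := fun k => c k * (0 : 𝕜) ^ k) 0 fun k hk => by
        rw [zero_pow hk, mul_zero]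
      rwa [← h0.tsum_eq] at h0
    · rw [hF z hz]
      exact h z hz
  have hF0 : F 0 = 0 :=
    tendsto_nhds_unique (hp.continuousAt.tendsto.mono_left (nhdsWithin_le_nhds (s := {0}ᶜ)))
      (tendsto_const_nhds.congr' (eventually_nhdsWithin_of_forall fun z hz => (hF z hz).symm))
  have hF_eq : F = 0 := funext fun z => by
    rcases eq_or_ne z 0 with rfl | hz
    exacts [hF0, hF z hz]
  exact (FormalMultilinearSeries.ofScalars_series_eq_zero 𝕜).mp (hF_eq ▸ hp).eq_zero

theorem stmt3_general (n : ℕ) :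
    (∀ z : ℂ, z ≠ 0 →
      Summable (fun m : ℕ => ‖((S2 (m + n) n / ((m + n).choose n : ℝ) : ℝ) : ℂ) *
          z ^ m / (m.factorial : ℂ)‖) ∧
      ((Complex.exp z - 1) / z) ^ n =
        ∑' m : ℕ, ((S2 (m + n) n / ((m + n).choose n : ℝ) : ℝ) : ℂ) *
          z ^ m / (m.factorial : ℂ)) ∧
    (∀ B : ℕ → ℂ,
      (∀ z : ℂ, z ≠ 0 →
        HasSum (fun m : ℕ => B m * z ^ m / (m.factorial : ℂ))
          (((Complex.exp z - 1) / z) ^ n)) →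
      ∀ m : ℕ, B m = ((S2 (m + n) n / ((m + n).choose n : ℝ) : ℝ) : ℂ)) := by
  refine ⟨fun z hz => ⟨summable_norm_S2_div_choose_mul_pow_div_factorial n z,
    (hasSum_exp_sub_one_div_pow n hz).tsum_eq.symm⟩, fun B hB m => ?_⟩
  set b : ℕ → ℂ := fun m => ((S2 (m + n) n / ((m + n).choose n : ℝ) : ℝ) : ℂ)
  have hcoeff : (fun k => (B k - b k) / k !) = 0 :=
    eq_zero_of_hasSum_mul_pow_of_ne_zero fun z hz => by
      simpa only [sub_self, div_mul_eq_mul_div, sub_mul, sub_div] using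
        (hB z hz).sub (hasSum_exp_sub_one_div_pow n hz)
  have hm := congr_fun hcoeff m
  rw [Pi.zero_apply, div_eq_zero_iff, sub_eq_zero] at hm
  exact hm.resolve_right (mod_cast m.factorial_ne_zero)

/-- For `n ≥ 1` and complex `z ≠ 0`, the absolutely convergent expansion
`((e^z - 1)/z)^n = ∑ₘ (S₂(m+n,n)/C(m+n,n)) z^m/m!` holds. Equivalently, the Bernoulli
numbers of order `-n`, i.e. any sequence `B` of Maclaurin coefficients of `((e^z-1)/z)^n`
(so that `((e^z-1)/z)^n = ∑ₘ B m · z^m/m!`), satisfy `B m = S₂(m+n,n)/C(m+n,n)`. -/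
theorem stmt3 (n : ℕ) (hn : 1 ≤ n) :
    (∀ z : ℂ, z ≠ 0 →
      Summable (fun m : ℕ => ‖((S2 (m + n) n / ((m + n).choose n : ℝ) : ℝ) : ℂ) *
          z ^ m / (m.factorial : ℂ)‖) ∧
      ((Complex.exp z - 1) / z) ^ n =
        ∑' m : ℕ, ((S2 (m + n) n / ((m + n).choose n : ℝ) : ℝ) : ℂ) *
          z ^ m / (m.factorial : ℂ)) ∧
    (∀ B : ℕ → ℂ,
      (∀ z : ℂ, z ≠ 0 →
        HasSum (fun m : ℕ => B m * z ^ m / (m.factorial : ℂ))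
          (((Complex.exp z - 1) / z) ^ n)) →
      ∀ m : ℕ, B m = ((S2 (m + n) n / ((m + n).choose n : ℝ) : ℝ) : ℂ)) :=
  stmt3_general n
end

section
/- Let α > 1 be real and let ω ∈ ℝ. Then the series ∑_{k=0}^{∞} (-1)^k binom(α,k) e^{-ikω} converges absolutely and its sum equals (1 - e^{-iω})^α, where the power is the principal complex power (Complex.cpow, with 0^α = 0). -/
/-!
Inside the unit disc the series is Mathlib's binomial series, whose sum is `(1 + w) ^ α`.
On the unit circle we pass to the limit with Abel's theorem. What makes this work is absolute
summability of the coefficients `b k = binom(α, k)` for `α > 0`: the recurrence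
`(k + 1) b (k + 1) = (α - k) b k` gives `α |b k| = k |b k| - (k + 1) |b (k + 1)|` for `k ≥ α`,
so `α ∑_{k ≥ K} |b k|` telescopes and is at most `K |b K|`. The limit of `(1 + x y) ^ α` as
`x → 1⁻` is `(1 + y) ^ α` because `z ↦ z ^ α` is continuous on `Re z ≥ 0` when `Re α > 0`.
-/

open Complex Filter Topology

/-- The generalized binomial coefficient
`binom(α,k) = α(α-1)⋯(α-k+1)/k!` (with `binom(α,0)=1`). -/
noncomputable def gbinom (α : ℝ) (k : ℕ) : ℝ :=
  (∏ i ∈ Finset.range k, (α - i)) / (k.factorial : ℝ)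

lemma succ_mul_gbinom_succ (α : ℝ) (k : ℕ) :
    (k + 1) * gbinom α (k + 1) = (α - k) * gbinom α k := by
  simp only [gbinom, Finset.prod_range_succ, Nat.factorial_succ]
  push_cast
  field_simp

lemma mul_abs_gbinom_eq_sub {α : ℝ} {k : ℕ} (hk : α ≤ k) :
    α * |gbinom α k| = k * |gbinom α k| - (k + 1) * |gbinom α (k + 1)| := by
  have h := congrArg abs (succ_mul_gbinom_succ α k)
  rw [abs_mul, abs_mul, abs_of_pos (by positivity), abs_sub_comm,
    abs_of_nonneg (sub_nonneg.2 hk)] at h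
  linarith

lemma summable_abs_gbinom {α : ℝ} (hα : 0 < α) : Summable fun k ↦ |gbinom α k| := by
  set K := ⌈α⌉₊
  let f : ℕ → ℝ := fun i ↦ (i + K : ℕ) * |gbinom α (i + K)|
  have hsum (n : ℕ) : ∑ i ∈ Finset.range n, α * |gbinom α (i + K)| ≤ f 0 := by
    have hstep (i : ℕ) : α * |gbinom α (i + K)| = f i - f (i + 1) := by
      simp only [f, add_right_comm _ 1 K]
      exact_mod_cast mul_abs_gbinom_eq_sub
        ((Nat.le_ceil α).trans (Nat.cast_le.2 (Nat.le_add_left K i)))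
    rw [Finset.sum_congr rfl fun i _ ↦ hstep i, Finset.sum_range_sub']
    linarith [show 0 ≤ f n by positivity]
  have := summable_of_sum_range_le (fun i ↦ by positivity) hsum
  exact (summable_nat_add_iff K).1 ((summable_mul_left_iff hα.ne').1 this)

lemma gbinom_eq_choose (α : ℝ) (k : ℕ) : gbinom α k = Ring.choose α k := by
  rw [Ring.choose_eq_smul, gbinom, smul_eq_mul, ← Polynomial.aeval_eq_smeval, Polynomial.aeval_def,
    Polynomial.eval₂_eq_eval_map, descPochhammer_map, descPochhammer_eval_eq_prod_range,
    inv_mul_eq_div]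

lemma hasSum_gbinom_mul_pow (α : ℝ) {w : ℂ} (hw : ‖w‖ < 1) :
    HasSum (fun k ↦ (gbinom α k : ℂ) * w ^ k) ((1 + w) ^ (α : ℂ)) := by
  have h := (one_add_cpow_hasFPowerSeriesOnBall_zero (a := α)).hasSum (y := w)
    (by rwa [← ENNReal.ofReal_one, Metric.eball_ofReal, Metric.mem_ball, dist_zero_right])
  simpa [binomialSeries, FormalMultilinearSeries.ofScalars_apply_eq, gbinom_eq_choose,
    ← ofReal_choose, mul_comm] using h

lemma hasSum_gbinom_mul_pow_of_norm_le_one {α : ℝ} (hα : 0 < α) {y : ℂ} (hy : ‖y‖ ≤ 1) :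
    HasSum (fun k ↦ (gbinom α k : ℂ) * y ^ k) ((1 + y) ^ (α : ℂ)) := by
  have hs : Summable fun k ↦ (gbinom α k : ℂ) * y ^ k := by
    refine (summable_abs_gbinom hα).of_norm_bounded fun k ↦ ?_
    rw [norm_mul, norm_pow, norm_real, Real.norm_eq_abs]
    exact mul_le_of_le_one_right (abs_nonneg _) (pow_le_one₀ (norm_nonneg _) hy)
  have habel := tendsto_map'_iff.1 <|
    tendsto_tsum_powerSeries_nhdsWithin_lt hs.hasSum.tendsto_sum_nat
  have hre : 0 ≤ (1 + y).re := by
    have := (abs_le.1 ((abs_re_le_norm y).trans hy)).1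
    simp only [add_re, one_re]
    linarith
  have hcont : ContinuousAt (fun x : ℝ ↦ (1 + x * y) ^ (α : ℂ)) 1 := by
    refine ContinuousAt.comp (g := fun w : ℂ ↦ w ^ (α : ℂ)) ?_ (by fun_prop)
    simpa using continuousAt_cpow_const_of_re_pos (Or.inl hre) (by simpa using hα)
  have hclosed : ∀ᶠ x : ℝ in 𝓝[<] 1,
      ((fun z ↦ ∑' k, (gbinom α k : ℂ) * y ^ k * z ^ k) ∘ ofReal) x = (1 + x * y) ^ (α : ℂ) := by
    filter_upwards [Ioo_mem_nhdsLT (show (-1 : ℝ) < 1 by norm_num)] with x hx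
    have hxy : ‖(x : ℂ) * y‖ < 1 := by
      rw [norm_mul, norm_real, Real.norm_eq_abs]
      nlinarith [abs_lt.2 hx, abs_nonneg x, norm_nonneg y]
    simp only [Function.comp_apply, mul_assoc, ← mul_pow, mul_comm y]
    exact (hasSum_gbinom_mul_pow α hxy).tsum_eq
  have hlim := (hcont.tendsto.mono_left nhdsWithin_le_nhds).congr' (hclosed.mono fun _ h ↦ h.symm)
  simpa [tendsto_nhds_unique habel hlim] using hs.hasSum

/-- For real `α > 1` and `ω ∈ ℝ`, the series `∑ₖ (-1)^k binom(α,k) e^{-ikω}` converges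
absolutely with sum `(1 - e^{-iω})^α` (principal complex power). -/
theorem stmt7 (α : ℝ) (hα : 1 < α) (ω : ℝ) :
    Summable (fun k : ℕ =>
      ‖(-1 : ℂ) ^ k * (gbinom α k : ℂ) * Complex.exp (-(Complex.I * k * ω))‖) ∧
    ∑' k : ℕ, (-1 : ℂ) ^ k * (gbinom α k : ℂ) * Complex.exp (-(Complex.I * k * ω)) =
      (1 - Complex.exp (-(Complex.I * ω))) ^ (α : ℂ) := by
  set z := exp (-(I * ω)) with hz_def
  have hz : ‖-z‖ = 1 := by simp [z, norm_exp]
  have hterm (k : ℕ) :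
      (-1 : ℂ) ^ k * (gbinom α k : ℂ) * exp (-(I * k * ω)) = (gbinom α k : ℂ) * (-z) ^ k := by
    rw [neg_pow z, hz_def, ← exp_nat_mul]
    ring_nf
  simp only [hterm, norm_mul, norm_pow, hz, one_pow, mul_one, norm_real, Real.norm_eq_abs]
  refine ⟨summable_abs_gbinom (by linarith), ?_⟩
  rw [sub_eq_add_neg]
  exact (hasSum_gbinom_mul_pow_of_norm_le_one (by linarith) hz.le).tsum_eq
end
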